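/- arXiv:2310.01948 — 3 statements merged into one kernel-verified Lean document; each statement's English description precedes it below -/
import Mathlib

section
/- Let m ≥ 1, e_i ∈ ℝ and η_i > 0 with e_i + η_i > 0 for 1 ≤ i ≤ m, and suppose Σ_{i=1}^m η_i < 1. Then the power series f(s) = (1/Π_{i=1}^m Γ(e_i+η_i)) · Σ_{n=0}^∞ Π_{i=1}^m Γ(e_i+η_i(1+n)) · (−s)^n/n! converges absolutely for every s ∈ ℂ, and its restriction to (0,∞) is completely monotone: f is infinitely differentiable on (0,∞) and (−1)^k f^{(k)}(s) ≥ 0 for every s > 0 and every integer k ≥ 0. -/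
namespace WrightC1
open MeasureTheory Finset Filter Real Set

noncomputable def h (c : ℝ) : ℝ → ℝ :=
  Set.indicator (Set.Ioi 0) fun x => Real.exp (-x) * x ^ (c - 1)

lemma h_nonneg (c x : ℝ) : 0 ≤ h c x := by
  unfold h
  by_cases hx : x ∈ Set.Ioi (0:ℝ)
  · rw [Set.indicator_of_mem hx]
    exact mul_nonneg (Real.exp_pos _).le (Real.rpow_nonneg (le_of_lt hx) _)
  · rw [Set.indicator_of_notMem hx]

lemma h_meas (c : ℝ) : Measurable (h c) := by
  unfold h
  exact Measurable.indicator (by fun_prop) measurableSet_Ioi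

lemma h_integrable {c : ℝ} (hc : 0 < c) : Integrable (h c) := by
  unfold h
  exact (integrable_indicator_iff measurableSet_Ioi).2 (Real.GammaIntegral_convergent hc)

lemma h_integral {c : ℝ} (hc : 0 < c) : ∫ x : ℝ, h c x = Real.Gamma c := by
  unfold h
  rw [integral_indicator measurableSet_Ioi]
  exact (Real.Gamma_eq_integral hc).symm


noncomputable def φ (m : ℕ) (η : ℕ → ℝ) (t : Fin m → ℝ) : ℝ :=
  ∏ i : Fin m, |t i| ^ η (i : ℕ)

noncomputable def W (m : ℕ) (e η : ℕ → ℝ) (t : Fin m → ℝ) : ℝ :=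
  ∏ i : Fin m, h (e (i : ℕ) + η (i : ℕ)) (t i)

noncomputable def A (m : ℕ) (e η : ℕ → ℝ) (n : ℕ) : ℝ :=
  ∏ i ∈ Finset.range m, Real.Gamma (e i + η i * (1 + n))

lemma φ_nonneg (m : ℕ) (η : ℕ → ℝ) (t : Fin m → ℝ) : 0 ≤ φ m η t :=
  Finset.prod_nonneg fun i _ => Real.rpow_nonneg (abs_nonneg _) _

lemma W_nonneg (m : ℕ) (e η : ℕ → ℝ) (t : Fin m → ℝ) : 0 ≤ W m e η t :=
  Finset.prod_nonneg fun i _ => h_nonneg _ _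

lemma φ_meas (m : ℕ) (η : ℕ → ℝ) : Measurable (φ m η) :=
  Finset.measurable_prod _ fun i _ => by fun_prop

lemma W_meas (m : ℕ) (e η : ℕ → ℝ) : Measurable (W m e η) :=
  Finset.measurable_prod _ fun i _ => (h_meas _).comp (measurable_pi_apply i)

lemma key_pointwise (m : ℕ) (e η : ℕ → ℝ) (n : ℕ) (t : Fin m → ℝ) :
    φ m η t ^ n * W m e η t = ∏ i : Fin m, h (e (i:ℕ) + η (i:ℕ) * (1 + n)) (t i) := by
  unfold φ W
  rw [← Finset.prod_pow, ← Finset.prod_mul_distrib]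
  refine Finset.prod_congr rfl fun i _ => ?_
  by_cases ht : t i ∈ Set.Ioi (0:ℝ)
  · have htp : (0:ℝ) < t i := ht
    unfold h
    rw [Set.indicator_of_mem ht, Set.indicator_of_mem ht, abs_of_pos htp,
      ← Real.rpow_natCast (t i ^ η (i:ℕ)) n, ← Real.rpow_mul htp.le]
    rw [mul_comm (Real.exp (-t i)) _, ← mul_assoc, ← Real.rpow_add htp, mul_comm _ (Real.exp (-t i))]
    congr 1
    ring
  · unfold h
    rw [Set.indicator_of_notMem ht, Set.indicator_of_notMem ht, mul_zero]

lemma moment (m : ℕ) (e η : ℕ → ℝ) (hη : ∀ i < m, 0 < η i) (heη : ∀ i < m, 0 < e i + η i)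
    (n : ℕ) :
    Integrable (fun t : Fin m → ℝ => φ m η t ^ n * W m e η t) ∧
      ∫ t : Fin m → ℝ, φ m η t ^ n * W m e η t = A m e η n := by
  have hpos : ∀ i : Fin m, 0 < e (i:ℕ) + η (i:ℕ) * (1 + n) := by
    intro i
    have h1 := heη i i.2
    have h2 := (hη i i.2).le
    have : (0:ℝ) ≤ (n:ℝ) := Nat.cast_nonneg n
    nlinarith
  constructor
  · have : (fun t : Fin m → ℝ => φ m η t ^ n * W m e η t)
        = fun t : Fin m → ℝ => ∏ i : Fin m, h (e (i:ℕ) + η (i:ℕ) * (1 + n)) (t i) := by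
      funext t; exact key_pointwise m e η n t
    rw [this]
    exact Integrable.fintype_prod fun i => h_integrable (hpos i)
  · simp_rw [key_pointwise m e η n]
    rw [MeasureTheory.volume_pi, MeasureTheory.integral_fintype_prod_eq_prod (ι := Fin m)
      (f := fun i x => h (e (i:ℕ) + η (i:ℕ) * (1 + n)) x)]
    rw [A, ← Fin.prod_univ_eq_prod_range]
    exact Finset.prod_congr rfl fun i _ => h_integral (hpos i)


lemma A_pos (m : ℕ) (e η : ℕ → ℝ) (hη : ∀ i < m, 0 < η i) (heη : ∀ i < m, 0 < e i + η i)
    (n : ℕ) : 0 < A m e η n := by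
  refine Finset.prod_pos fun i hi => Real.Gamma_pos_of_pos ?_
  have h1 := heη i (Finset.mem_range.1 hi)
  have h2 := (hη i (Finset.mem_range.1 hi)).le
  have : (0:ℝ) ≤ (n:ℝ) := Nat.cast_nonneg n
  nlinarith

lemma gamma_step {x c : ℝ} (hx : 0 < x) (h0 : 0 < c) (h1 : c < 1) :
    Real.Gamma (x + c) ≤ Real.Gamma x * x ^ c := by
  have key := Real.Gamma_mul_add_mul_le_rpow_Gamma_mul_rpow_Gamma hx
    (by linarith : (0:ℝ) < x + 1) (by linarith : 0 < 1 - c) h0 (by ring)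
  have harg : (1 - c) * x + c * (x + 1) = x + c := by ring
  rw [harg] at key
  have hG : 0 < Real.Gamma x := Real.Gamma_pos_of_pos hx
  have hG1 : Real.Gamma (x + 1) = x * Real.Gamma x := Real.Gamma_add_one hx.ne'
  rw [hG1] at key
  calc Real.Gamma (x + c) ≤ Real.Gamma x ^ (1 - c) * (x * Real.Gamma x) ^ c := key
    _ = Real.Gamma x * x ^ c := by
        rw [Real.mul_rpow hx.le hG.le, ← mul_assoc, mul_comm (Real.Gamma x ^ (1-c)) _,
          mul_assoc, ← Real.rpow_add hG]
        norm_num [mul_comm]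

lemma A_step (m : ℕ) (e η : ℕ → ℝ) (hη : ∀ i < m, 0 < η i) (heη : ∀ i < m, 0 < e i + η i)
    (hηsum : ∑ i ∈ Finset.range m, η i < 1) (n : ℕ) :
    A m e η (n + 1) ≤ A m e η n *
      ((1 + ∑ i ∈ Finset.range m, |e i|) * (n + 2)) ^ (∑ i ∈ Finset.range m, η i) := by
  set C : ℝ := 1 + ∑ i ∈ Finset.range m, |e i| with hC
  have hC1 : (1:ℝ) ≤ C := by
    have : (0:ℝ) ≤ ∑ i ∈ Finset.range m, |e i| :=
      Finset.sum_nonneg fun i _ => abs_nonneg _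
    linarith
  have hCn : (0:ℝ) < C * (n + 2) := by positivity
  have hηlt : ∀ i < m, η i < 1 := by
    intro i hi
    have hle : η i ≤ ∑ j ∈ Finset.range m, η j :=
      Finset.single_le_sum (fun j hj => (hη j (Finset.mem_range.1 hj)).le)
        (Finset.mem_range.2 hi)
    linarith
  have hx : ∀ i < m, 0 < e i + η i * (1 + n) := by
    intro i hi
    have h1 := heη i hi; have h2 := (hη i hi).le
    have : (0:ℝ) ≤ (n:ℝ) := Nat.cast_nonneg n
    nlinarith
  calc A m e η (n + 1)
      = ∏ i ∈ Finset.range m, Real.Gamma ((e i + η i * (1 + n)) + η i) := by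
        unfold A
        refine Finset.prod_congr rfl fun i _ => ?_
        congr 1
        push_cast
        ring
    _ ≤ ∏ i ∈ Finset.range m,
          Real.Gamma (e i + η i * (1 + n)) * (e i + η i * (1 + n)) ^ η i := by
        refine Finset.prod_le_prod (fun i hi => (Real.Gamma_pos_of_pos ?_).le)
          (fun i hi => gamma_step (hx i (Finset.mem_range.1 hi))
            (hη i (Finset.mem_range.1 hi)) (hηlt i (Finset.mem_range.1 hi)))
        have h1 := hx i (Finset.mem_range.1 hi)
        have h2 := hη i (Finset.mem_range.1 hi)
        linarith
    _ ≤ ∏ i ∈ Finset.range m,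
          Real.Gamma (e i + η i * (1 + n)) * (C * (n + 2)) ^ η i := by
        refine Finset.prod_le_prod (fun i hi => ?_) (fun i hi => ?_)
        · exact mul_nonneg (Real.Gamma_pos_of_pos (hx i (Finset.mem_range.1 hi))).le
            (Real.rpow_nonneg (hx i (Finset.mem_range.1 hi)).le _)
        · refine mul_le_mul_of_nonneg_left ?_
            (Real.Gamma_pos_of_pos (hx i (Finset.mem_range.1 hi))).le
          refine Real.rpow_le_rpow (hx i (Finset.mem_range.1 hi)).le ?_
            (hη i (Finset.mem_range.1 hi)).le
          have habs : e i ≤ |e i| := le_abs_self _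
          have hsum : |e i| ≤ C - 1 := by
            rw [hC]
            have : |e i| ≤ ∑ j ∈ Finset.range m, |e j| :=
              Finset.single_le_sum (fun j _ => abs_nonneg (e j)) hi
            linarith
          have hηle := (hηlt i (Finset.mem_range.1 hi)).le
          have hηpos := (hη i (Finset.mem_range.1 hi)).le
          have hn0 : (0:ℝ) ≤ (n:ℝ) := Nat.cast_nonneg n
          nlinarith
    _ = A m e η n * (C * (n + 2)) ^ (∑ i ∈ Finset.range m, η i) := by
        rw [Finset.prod_mul_distrib, ← Real.rpow_sum_of_pos hCn]
        rfl


lemma A_summable (m : ℕ) (hm : 1 ≤ m) (e η : ℕ → ℝ) (hη : ∀ i < m, 0 < η i)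
    (heη : ∀ i < m, 0 < e i + η i) (hηsum : ∑ i ∈ Finset.range m, η i < 1)
    (r : ℝ) (hr : 0 ≤ r) :
    Summable fun n : ℕ => A m e η n * r ^ n / n.factorial := by
  set σ : ℝ := ∑ i ∈ Finset.range m, η i with hσ
  have hσpos : 0 < σ := Finset.sum_pos (fun i hi => hη i (Finset.mem_range.1 hi))
    (Finset.nonempty_range_iff.2 (by omega))
  set C : ℝ := 1 + ∑ i ∈ Finset.range m, |e i| with hC
  have hC1 : (1:ℝ) ≤ C := by
    have : (0:ℝ) ≤ ∑ i ∈ Finset.range m, |e i| :=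
      Finset.sum_nonneg fun i _ => abs_nonneg _
    linarith
  have hC0 : (0:ℝ) < C := by linarith
  -- the ratio tends to zero
  have hbound : ∀ n : ℕ, (C * ((n:ℝ) + 2)) ^ σ * r / ((n:ℝ) + 1)
      ≤ (r * C ^ σ * 2 ^ σ) * ((n:ℝ) + 1) ^ (σ - 1) := by
    intro n
    have hn1 : (0:ℝ) < (n:ℝ) + 1 := by positivity
    have hn2 : (0:ℝ) < (n:ℝ) + 2 := by positivity
    have h1 : (C * ((n:ℝ) + 2)) ^ σ = C ^ σ * ((n:ℝ) + 2) ^ σ :=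
      Real.mul_rpow hC0.le hn2.le
    have h2 : ((n:ℝ) + 2) ^ σ ≤ (2 * ((n:ℝ) + 1)) ^ σ :=
      Real.rpow_le_rpow hn2.le (by linarith) hσpos.le
    have h3 : (2 * ((n:ℝ) + 1)) ^ σ = 2 ^ σ * ((n:ℝ) + 1) ^ σ :=
      Real.mul_rpow (by norm_num) hn1.le
    have h4 : ((n:ℝ) + 1) ^ (σ - 1) = ((n:ℝ) + 1) ^ σ / ((n:ℝ) + 1) := by
      rw [Real.rpow_sub hn1, Real.rpow_one]
    have key2 : (C * ((n:ℝ)+2)) ^ σ * r ≤ (r * C ^ σ * 2 ^ σ) * ((n:ℝ)+1) ^ σ := by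
      rw [h1]
      calc C ^ σ * ((n:ℝ)+2) ^ σ * r ≤ C ^ σ * (2 ^ σ * ((n:ℝ)+1) ^ σ) * r := by
            gcongr
            rw [← h3]; exact h2
        _ = (r * C ^ σ * 2 ^ σ) * ((n:ℝ)+1) ^ σ := by ring
    rw [h4, ← mul_div_assoc]
    gcongr
  have htend : Tendsto (fun n : ℕ => (r * C ^ σ * 2 ^ σ) * ((n:ℝ) + 1) ^ (σ - 1))
      atTop (nhds 0) := by
    have h0 : Tendsto (fun n : ℕ => ((n:ℝ) + 1) ^ (σ - 1)) atTop (nhds 0) := by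
      have hneg : σ - 1 = -(1 - σ) := by ring
      rw [hneg]
      exact (tendsto_rpow_neg_atTop (by linarith)).comp
        (tendsto_atTop_add_const_right atTop 1 tendsto_natCast_atTop_atTop)
    simpa using h0.const_mul (r * C ^ σ * 2 ^ σ)
  have hev : ∀ᶠ n : ℕ in atTop, (C * ((n:ℝ) + 2)) ^ σ * r / ((n:ℝ) + 1) ≤ 1/2 := by
    have : ∀ᶠ n : ℕ in atTop,
        (r * C ^ σ * 2 ^ σ) * ((n:ℝ) + 1) ^ (σ - 1) < 1/2 :=
      htend.eventually (Filter.Tendsto.eventually_lt_const (by norm_num) tendsto_id)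
    filter_upwards [this] with n hn
    exact le_of_lt (lt_of_le_of_lt (hbound n) hn)
  refine summable_of_ratio_norm_eventually_le (r := 1/2) (by norm_num) ?_
  filter_upwards [hev] with n hn
  have hA := A_pos m e η hη heη
  have hAn1 := A_step m e η hη heη hηsum n
  have hn1 : (0:ℝ) < (n:ℝ) + 1 := by positivity
  have hfac : (0:ℝ) < (n.factorial : ℝ) := by positivity
  rw [Real.norm_of_nonneg (div_nonneg (mul_nonneg (hA _).le (pow_nonneg hr _)) (Nat.cast_nonneg _)),
    Real.norm_of_nonneg (div_nonneg (mul_nonneg (hA _).le (pow_nonneg hr _)) (Nat.cast_nonneg _))]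
  have hfact : ((n+1).factorial : ℝ) = ((n:ℝ) + 1) * (n.factorial : ℝ) := by
    push_cast [Nat.factorial_succ]; ring
  rw [← hC] at hAn1
  have key : A m e η (n+1) * r ≤ A m e η n * (1/2) * ((n:ℝ) + 1) := by
    calc A m e η (n+1) * r ≤ A m e η n * (C * ((n:ℝ)+2)) ^ σ * r := by
          exact mul_le_mul_of_nonneg_right hAn1 hr
      _ = A m e η n * ((C * ((n:ℝ)+2)) ^ σ * r / ((n:ℝ)+1)) * ((n:ℝ)+1) := by
          field_simp
      _ ≤ A m e η n * (1/2) * ((n:ℝ)+1) := by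
          refine mul_le_mul_of_nonneg_right (mul_le_mul_of_nonneg_left hn ?_) hn1.le
          exact (hA n).le
  rw [hfact]
  have hr1 : A m e η (n+1) * r ^ (n+1) = (A m e η (n+1) * r) * r ^ n := by ring
  rw [hr1]
  calc (A m e η (n+1) * r) * r ^ n / (((n:ℝ)+1) * (n.factorial:ℝ))
      ≤ (A m e η n * (1/2) * ((n:ℝ)+1)) * r ^ n / (((n:ℝ)+1) * (n.factorial:ℝ)) := by
        gcongr

    _ = 1/2 * (A m e η n * r ^ n / (n.factorial:ℝ)) := by
        field_simp



noncomputable def F (m : ℕ) (e η : ℕ → ℝ) (k : ℕ) (s : ℝ) : ℝ :=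
  ∫ t : Fin m → ℝ, Real.exp (-(s * φ m η t)) * (φ m η t ^ k * W m e η t)

lemma poly_exp_bound {y a : ℝ} (hy : 0 ≤ y) (ha : 0 < a) (k : ℕ) :
    y ^ k * Real.exp (-(a * y)) ≤ (k.factorial : ℝ) * (1/a) ^ k := by
  have hay : 0 ≤ a * y := mul_nonneg ha.le hy
  have h1 : (a * y) ^ k / (k.factorial : ℝ) ≤ Real.exp (a * y) := by
    calc (a * y) ^ k / (k.factorial : ℝ)
        ≤ ∑ i ∈ Finset.range (k+1), (a*y) ^ i / (i.factorial : ℝ) := by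
          refine Finset.single_le_sum (f := fun i => (a*y)^i / (i.factorial : ℝ))
            (fun i _ => by positivity) (Finset.self_mem_range_succ k)
      _ ≤ Real.exp (a * y) := Real.sum_le_exp_of_nonneg hay _
  have h2 : y ^ k = (a*y) ^ k * (1/a) ^ k := by
    rw [← mul_pow]
    congr 1
    field_simp
  rw [h2]
  have h3 : (a*y)^k ≤ (k.factorial : ℝ) * Real.exp (a*y) := by
    rw [div_le_iff₀ (by positivity)] at h1
    linarith [h1]
  calc (a*y)^k * (1/a)^k * Real.exp (-(a*y))
      ≤ ((k.factorial : ℝ) * Real.exp (a*y)) * (1/a)^k * Real.exp (-(a*y)) := by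
        have := Real.exp_pos (-(a*y))
        gcongr
    _ = (k.factorial : ℝ) * (1/a)^k * (Real.exp (a*y) * Real.exp (-(a*y))) := by ring
    _ = (k.factorial : ℝ) * (1/a)^k := by
        rw [← Real.exp_add]
        simp

lemma F_integrand_meas (m : ℕ) (e η : ℕ → ℝ) (k : ℕ) (s : ℝ) :
    Measurable (fun t : Fin m → ℝ => Real.exp (-(s * φ m η t)) * (φ m η t ^ k * W m e η t)) := by
  have h1 := φ_meas m η
  have h2 := W_meas m e η
  fun_prop

lemma F_integrable (m : ℕ) (e η : ℕ → ℝ) (hη : ∀ i < m, 0 < η i)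
    (heη : ∀ i < m, 0 < e i + η i) (k : ℕ) {s : ℝ} (hs : 0 < s) :
    Integrable (fun t : Fin m → ℝ =>
      Real.exp (-(s * φ m η t)) * (φ m η t ^ k * W m e η t)) := by
  refine Integrable.mono' (((moment m e η hη heη 0).1).const_mul ((k.factorial : ℝ) * (1/s)^k))
    (F_integrand_meas m e η k s).aestronglyMeasurable ?_
  refine Filter.Eventually.of_forall fun t => ?_
  have hφ := φ_nonneg m η t
  have hW := W_nonneg m e η t
  rw [Real.norm_of_nonneg (by positivity)]
  have hb := poly_exp_bound hφ hs k
  calc Real.exp (-(s * φ m η t)) * (φ m η t ^ k * W m e η t)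
      = (φ m η t ^ k * Real.exp (-(s * φ m η t))) * W m e η t := by ring
    _ ≤ ((k.factorial : ℝ) * (1/s)^k) * W m e η t := by gcongr
    _ = ((k.factorial : ℝ) * (1/s)^k) * (φ m η t ^ 0 * W m e η t) := by
        rw [pow_zero, one_mul]

lemma F_nonneg (m : ℕ) (e η : ℕ → ℝ) (k : ℕ) (s : ℝ) : 0 ≤ F m e η k s := by
  refine integral_nonneg fun t => ?_
  have hφ := φ_nonneg m η t
  have hW := W_nonneg m e η t
  positivity

lemma F_hasDerivAt (m : ℕ) (e η : ℕ → ℝ) (hη : ∀ i < m, 0 < η i)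
    (heη : ∀ i < m, 0 < e i + η i) (k : ℕ) {s : ℝ} (hs : 0 < s) :
    HasDerivAt (F m e η k) (-(F m e η (k+1) s)) s := by
  set G : ℝ → (Fin m → ℝ) → ℝ := fun x t =>
    Real.exp (-(x * φ m η t)) * (φ m η t ^ k * W m e η t) with hG
  set G' : ℝ → (Fin m → ℝ) → ℝ := fun x t =>
    -(Real.exp (-(x * φ m η t)) * (φ m η t ^ (k+1) * W m e η t)) with hG'
  have hε : (0:ℝ) < s/2 := by linarith
  have key := hasDerivAt_integral_of_dominated_loc_of_deriv_le (F := G) (F' := G')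
    (x₀ := s) (s := Metric.ball s (s/2)) (Metric.ball_mem_nhds s hε)
    (bound := fun t => (((k+1).factorial : ℝ) * (1/(s/2))^(k+1)) * W m e η t)
    (Filter.Eventually.of_forall fun x => (F_integrand_meas m e η k x).aestronglyMeasurable)
    (F_integrable m e η hη heη k hs)
    ((F_integrand_meas m e η (k+1) s).neg.aestronglyMeasurable)
    ?_ ?_ ?_
  · have : ∫ t, G' s t = -(F m e η (k+1) s) := by
      rw [hG']
      rw [integral_neg]
      rfl
    rw [this] at key
    exact key.2
  · refine Filter.Eventually.of_forall fun t => fun x hx => ?_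
    have hx2 : s/2 < x := by
      have := abs_lt.1 (Metric.mem_ball.1 hx)
      linarith [this.1]
    have hφ := φ_nonneg m η t
    have hW := W_nonneg m e η t
    rw [hG']
    rw [norm_neg, Real.norm_of_nonneg (by positivity)]
    have hb := poly_exp_bound hφ (by linarith : (0:ℝ) < s/2) (k+1)
    calc Real.exp (-(x * φ m η t)) * (φ m η t ^ (k+1) * W m e η t)
        ≤ Real.exp (-((s/2) * φ m η t)) * (φ m η t ^ (k+1) * W m e η t) := by
          have : -(x * φ m η t) ≤ -((s/2) * φ m η t) := by nlinarith
          have he := Real.exp_le_exp.2 this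
          have h0 : 0 ≤ φ m η t ^ (k+1) * W m e η t := by positivity
          exact mul_le_mul_of_nonneg_right he h0
      _ = (φ m η t ^ (k+1) * Real.exp (-((s/2) * φ m η t))) * W m e η t := by ring
      _ ≤ (((k+1).factorial : ℝ) * (1/(s/2))^(k+1)) * W m e η t := by gcongr
  · have h0 : Integrable (fun t : Fin m → ℝ =>
        (((k+1).factorial : ℝ) * (1/(s/2))^(k+1)) * (φ m η t ^ 0 * W m e η t)) :=
      (moment m e η hη heη 0).1.const_mul _
    exact h0.congr (Filter.Eventually.of_forall fun t => by simp)
  · refine Filter.Eventually.of_forall fun t => fun x hx => ?_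
    have hd : HasDerivAt (fun y : ℝ => -(y * φ m η t)) (-(φ m η t)) x := by
      exact (hasDerivAt_mul_const (φ m η t)).neg
    have hexp := hd.exp
    have := hexp.mul_const (φ m η t ^ k * W m e η t)
    refine this.congr_deriv ?_
    rw [hG']
    ring

lemma F_eq_tsum (m : ℕ) (hm : 1 ≤ m) (e η : ℕ → ℝ) (hη : ∀ i < m, 0 < η i)
    (heη : ∀ i < m, 0 < e i + η i) (hηsum : ∑ i ∈ Finset.range m, η i < 1)
    {s : ℝ} (hs : 0 < s) :
    F m e η 0 s = ∑' n : ℕ, A m e η n * (-s) ^ n / (n.factorial : ℝ) := by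
  set u : ℕ → (Fin m → ℝ) → ℝ :=
    fun n t => ((-s)^n / (n.factorial : ℝ)) * (φ m η t ^ n * W m e η t) with hu
  have hint : ∀ n, Integrable (u n) := fun n => (moment m e η hη heη n).1.const_mul _
  have hnormval : ∀ n t, ‖u n t‖ = (s^n / (n.factorial : ℝ)) * (φ m η t ^ n * W m e η t) := by
    intro n t
    rw [hu]
    rw [norm_mul, Real.norm_of_nonneg (mul_nonneg (pow_nonneg (φ_nonneg m η t) n) (W_nonneg m e η t)),
      Real.norm_eq_abs, abs_div, abs_pow, abs_neg, abs_of_pos hs, Nat.abs_cast]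
  have hnorm : ∀ n, ∫ t : Fin m → ℝ, ‖u n t‖ = (s^n / (n.factorial : ℝ)) * A m e η n := by
    intro n
    simp_rw [hnormval n]
    rw [MeasureTheory.integral_const_mul, (moment m e η hη heη n).2]
  have hsum : Summable fun n => ∫ t : Fin m → ℝ, ‖u n t‖ := by
    refine Summable.congr (A_summable m hm e η hη heη hηsum s hs.le) fun n => ?_
    rw [hnorm n]; ring
  have key := MeasureTheory.integral_tsum_of_summable_integral_norm hint hsum
  have hpt : ∀ t : Fin m → ℝ, ∑' n, u n t
      = Real.exp (-(s * φ m η t)) * (φ m η t ^ 0 * W m e η t) := by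
    intro t
    rw [pow_zero, one_mul]
    have hexp : Real.exp (-(s * φ m η t))
        = ∑' n : ℕ, (-(s * φ m η t))^n / (n.factorial : ℝ) := by
      rw [Real.exp_eq_exp_ℝ, NormedSpace.exp_eq_tsum_div]
    rw [hexp, ← tsum_mul_right]
    refine tsum_congr fun n => ?_
    rw [hu]
    have hneg : (-(s * φ m η t))^n = (-s)^n * (φ m η t)^n := by
      rw [show -(s * φ m η t) = (-s) * (φ m η t) by ring, mul_pow]
    rw [hneg]
    ring
  calc F m e η 0 s = ∫ t : Fin m → ℝ, ∑' n, u n t := by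
        unfold F
        exact (integral_congr_ae (Filter.Eventually.of_forall hpt)).symm
    _ = ∑' n, ∫ t : Fin m → ℝ, u n t := key.symm
    _ = ∑' n : ℕ, A m e η n * (-s) ^ n / (n.factorial : ℝ) := by
        refine tsum_congr fun n => ?_
        simp only [hu]
        rw [MeasureTheory.integral_const_mul, (moment m e η hη heη n).2]
        ring


end WrightC1

open MeasureTheory Finset Filter Complex Real

/-- the generalized Wright function `(1/K₁)·_mΨ_0[(eᵢ+ηᵢ,ηᵢ)|−s]` (Laplace
transform of the class (C1) Fox-H density) is entire and completely monotone on `(0,∞)`. -/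
theorem wright_C1_completely_monotone
    (m : ℕ) (hm : 1 ≤ m)
    (e η : ℕ → ℝ) (hη : ∀ i < m, 0 < η i) (heη : ∀ i < m, 0 < e i + η i)
    (hηsum : ∑ i ∈ Finset.range m, η i < 1)
    (f : ℝ → ℝ)
    (hf : ∀ s : ℝ, f s = (1 / ∏ i ∈ Finset.range m, Real.Gamma (e i + η i)) *
      ∑' n : ℕ, (∏ i ∈ Finset.range m, Real.Gamma (e i + η i * (1 + n))) *
        (-s) ^ n / (n.factorial : ℝ)) :
    (∀ z : ℂ, Summable fun n : ℕ =>
      ‖((∏ i ∈ Finset.range m, Real.Gamma (e i + η i * (1 + n)) : ℝ) : ℂ) *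
        z ^ n / (n.factorial : ℝ)‖) ∧
    ContDiffOn ℝ (⊤ : ℕ∞) f (Set.Ioi 0) ∧
    ∀ k : ℕ, ∀ s > (0 : ℝ), 0 ≤ (-1 : ℝ) ^ k * iteratedDerivWithin k f (Set.Ioi 0) s := by
  have hA_def : ∀ n : ℕ, (∏ i ∈ Finset.range m, Real.Gamma (e i + η i * (1 + n)))
      = WrightC1.A m e η n := fun n => rfl
  set K : ℝ := ∏ i ∈ Finset.range m, Real.Gamma (e i + η i) with hK_def
  have hK : 0 < K := Finset.prod_pos fun i hi =>
    Real.Gamma_pos_of_pos (heη i (Finset.mem_range.1 hi))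
  -- the iterated derivatives
  have hder : ∀ k : ℕ, ∀ x ∈ Set.Ioi (0:ℝ),
      iteratedDerivWithin k f (Set.Ioi 0) x = (-1:ℝ)^k * (1/K) * WrightC1.F m e η k x := by
    intro k
    induction k with
    | zero =>
      intro x hx
      rw [iteratedDerivWithin_zero, hf x, pow_zero, one_mul,
        WrightC1.F_eq_tsum m hm e η hη heη hηsum (Set.mem_Ioi.1 hx)]
      simp_rw [hA_def]
    | succ k ih =>
      intro x hx
      have hx0 : (0:ℝ) < x := Set.mem_Ioi.1 hx
      have hUD : UniqueDiffWithinAt ℝ (Set.Ioi (0:ℝ)) x := (uniqueDiffOn_Ioi 0) x hx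
      rw [iteratedDerivWithin_succ, derivWithin_of_isOpen isOpen_Ioi hx]
      have hEq : iteratedDerivWithin k f (Set.Ioi 0)
          =ᶠ[nhds x] fun y => (-1:ℝ)^k * (1/K) * WrightC1.F m e η k y := by
        filter_upwards [isOpen_Ioi.mem_nhds hx] with y hy
        exact ih y hy
      rw [hEq.deriv_eq]
      have hD := (WrightC1.F_hasDerivAt m e η hη heη k hx0).const_mul ((-1:ℝ)^k * (1/K))
      rw [hD.deriv]
      ring
  refine ⟨?_, ?_, ?_⟩
  · intro z
    refine Summable.congr (WrightC1.A_summable m hm e η hη heη hηsum ‖z‖ (norm_nonneg z))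
      fun n => ?_
    simp_rw [hA_def]
    rw [norm_div, norm_mul, norm_pow, Complex.norm_real, Real.norm_eq_abs,
      abs_of_pos (WrightC1.A_pos m e η hη heη n), Complex.norm_real, Real.norm_eq_abs,
      Nat.abs_cast]
  · set c : ℕ → ℝ := fun n => (1/K) * (WrightC1.A m e η n * (-1)^n / n.factorial) with hc
    set p := FormalMultilinearSeries.ofScalars ℝ c with hp
    have hrad : p.radius = ⊤ := by
      refine FormalMultilinearSeries.radius_eq_top_of_summable_norm p fun r => ?_
      have hs := (WrightC1.A_summable m hm e η hη heη hηsum r r.coe_nonneg).mul_left (1/K)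
      refine Summable.congr hs fun n => ?_
      rw [hp, FormalMultilinearSeries.ofScalars_norm, hc]
      rw [Real.norm_eq_abs, abs_mul, abs_div, abs_one, abs_of_pos hK, abs_div, abs_mul,
        _root_.abs_pow, _root_.abs_neg, _root_.abs_one, one_pow, mul_one,
        abs_of_pos (WrightC1.A_pos m e η hη heη n), Nat.abs_cast]
      ring
    have hball := p.hasFPowerSeriesOnBall (by rw [hrad]; exact ENNReal.zero_lt_top)
    have hfeq : f = p.sum := by
      funext x
      rw [hf x]
      have hsum : p.sum x = ∑' n : ℕ, c n • x ^ n :=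
        FormalMultilinearSeries.ofScalars_sum_eq c x
      rw [hsum, ← tsum_mul_left]
      refine tsum_congr fun n => ?_
      simp_rw [hA_def]
      rw [hc, smul_eq_mul, neg_pow]
      ring
    have hAn : AnalyticOnNhd ℝ f (Set.Ioi 0) := by
      rw [hfeq]
      intro x _
      refine hball.analyticAt_of_mem ?_
      rw [hrad]
      exact EMetric.mem_ball.2 (edist_lt_top _ _)
    exact hAn.contDiffOn (uniqueDiffOn_Ioi 0)
  · intro k s hs
    rw [hder k s (Set.mem_Ioi.2 hs), ← mul_assoc, ← mul_assoc, ← mul_pow]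
    have h1 : ((-1:ℝ) * -1) ^ k = 1 := by norm_num
    rw [h1, one_mul]
    have := WrightC1.F_nonneg m e η k s
    positivity
end

section
/- Let p ≥ 1, e_i ∈ ℝ, η_i > 0, b_i > 0 with e_i + η_i > 0 for 1 ≤ i ≤ p, and Σ_{i=1}^p b_i > 1. Then the power series f(s) = (1/K₂) · Σ_{n=0}^∞ [Π_{i=1}^p Γ(e_i+η_i(1+n)) / Π_{i=1}^p Γ(e_i+b_i+η_i(1+n))] · (−s)^n/n!, with K₂ = Π_{i=1}^p [Γ(e_i+η_i)/Γ(e_i+b_i+η_i)], converges absolutely for every s ∈ ℂ, and its restriction to (0,∞) is completely monotone: f is infinitely differentiable on (0,∞) and (−1)^k f^{(k)}(s) ≥ 0 for every s > 0 and every integer k ≥ 0. -/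
open MeasureTheory Finset Filter Complex Real

lemma cm_aux_ofReal_beta {x y : ℝ} (t : ℝ) (ht : t ∈ Set.Ioc (0:ℝ) 1) :
    ((t ^ (x-1) * (1-t) ^ (y-1) : ℝ) : ℂ) = (t:ℂ) ^ ((x:ℂ)-1) * ((1:ℂ)-t) ^ ((y:ℂ)-1) := by
  obtain ⟨ht0, ht1⟩ := ht
  rw [Complex.ofReal_mul, Complex.ofReal_cpow ht0.le, Complex.ofReal_cpow (by linarith)]
  push_cast
  ring_nf

lemma cm_aux_beta_integrable {x y : ℝ} (hx : 0 < x) (hy : 0 < y) :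
    IntegrableOn (fun t : ℝ => t ^ (x-1) * (1-t) ^ (y-1)) (Set.Ioc 0 1) := by
  have h := Complex.betaIntegral_convergent (u := (x:ℂ)) (v := (y:ℂ)) (by simpa) (by simpa)
  rw [intervalIntegrable_iff_integrableOn_Ioc_of_le zero_le_one] at h
  exact IntegrableOn.congr_fun h.re
    (fun t ht => by rw [← cm_aux_ofReal_beta t ht]; simp) measurableSet_Ioc

lemma cm_aux_beta_value {x y : ℝ} (hx : 0 < x) (hy : 0 < y) :
    ∫ t in Set.Ioc (0:ℝ) 1, t ^ (x-1) * (1-t) ^ (y-1)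
      = Real.Gamma x * Real.Gamma y / Real.Gamma (x+y) := by
  have h := Complex.Gamma_mul_Gamma_eq_betaIntegral (s := (x:ℂ)) (t := (y:ℂ)) (by simpa) (by simpa)
  have hB : Complex.betaIntegral x y
      = ((∫ t in Set.Ioc (0:ℝ) 1, t ^ (x-1) * (1-t) ^ (y-1) : ℝ) : ℂ) := by
    rw [Complex.betaIntegral, intervalIntegral.integral_of_le zero_le_one]
    rw [show (∫ t in Set.Ioc (0:ℝ) 1, (t:ℂ) ^ ((x:ℂ)-1) * ((1:ℂ)-t) ^ ((y:ℂ)-1))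
        = ∫ t in Set.Ioc (0:ℝ) 1, ((t ^ (x-1) * (1-t) ^ (y-1) : ℝ) : ℂ) from
      setIntegral_congr_fun measurableSet_Ioc (fun t ht => (cm_aux_ofReal_beta t ht).symm)]
    exact integral_ofReal
  rw [hB, ← Complex.ofReal_add, Complex.Gamma_ofReal, Complex.Gamma_ofReal,
    Complex.Gamma_ofReal, ← Complex.ofReal_mul, ← Complex.ofReal_mul] at h
  have h' := Complex.ofReal_injective h
  have hΓ : Real.Gamma (x+y) ≠ 0 := (Real.Gamma_pos_of_pos (by linarith)).ne'
  field_simp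
  linarith [h']

lemma cm_aux_ratio_eq {x y : ℝ} (hx : 0 < x) (hy : 0 < y) :
    Real.Gamma x / Real.Gamma (x + y)
      = (Real.Gamma y)⁻¹ * ∫ t in Set.Ioc (0:ℝ) 1, t ^ (x-1) * (1-t) ^ (y-1) := by
  rw [cm_aux_beta_value hx hy]
  have h1 : Real.Gamma y ≠ 0 := (Real.Gamma_pos_of_pos hy).ne'
  have h2 : Real.Gamma (x+y) ≠ 0 := (Real.Gamma_pos_of_pos (by linarith)).ne'
  field_simp

lemma cm_aux_ratio_mono {x₀ x y : ℝ} (hx₀ : 0 < x₀) (hx : x₀ ≤ x) (hy : 0 < y) :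
    Real.Gamma x / Real.Gamma (x + y) ≤ Real.Gamma x₀ / Real.Gamma (x₀ + y) := by
  rw [cm_aux_ratio_eq (lt_of_lt_of_le hx₀ hx) hy, cm_aux_ratio_eq hx₀ hy]
  have hΓ : 0 ≤ (Real.Gamma y)⁻¹ := (inv_pos.mpr (Real.Gamma_pos_of_pos hy)).le
  refine mul_le_mul_of_nonneg_left ?_ hΓ
  refine setIntegral_mono_on (cm_aux_beta_integrable (lt_of_lt_of_le hx₀ hx) hy)
    (cm_aux_beta_integrable hx₀ hy) measurableSet_Ioc (fun t ht => ?_)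
  have h1 : t ^ (x-1) ≤ t ^ (x₀-1) :=
    Real.rpow_le_rpow_of_exponent_ge ht.1 ht.2 (by linarith)
  exact mul_le_mul_of_nonneg_right h1 (Real.rpow_nonneg (by linarith [ht.1.le, ht.2]) _)

noncomputable def cmA (e η b : ℕ → ℝ) (m j : ℕ) : ℝ :=
  ∏ i ∈ Finset.range m,
    (Real.Gamma (e i + η i * (1 + j)) / Real.Gamma (e i + b i + η i * (1 + j)))

lemma cmA_pos {e η b : ℕ → ℝ} {m : ℕ} (hη : ∀ i < m, 0 < η i) (hb : ∀ i < m, 0 < b i)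
    (heη : ∀ i < m, 0 < e i + η i) (j : ℕ) : 0 < cmA e η b m j := by
  refine Finset.prod_pos (fun i hi => ?_)
  rw [Finset.mem_range] at hi
  have h1 : 0 < e i + η i * (1 + j) := by
    have := heη i hi; have := hη i hi
    nlinarith [Nat.cast_nonneg (α := ℝ) j]
  have h2 : 0 < e i + b i + η i * (1 + j) := by have := hb i hi; linarith
  exact div_pos (Real.Gamma_pos_of_pos h1) (Real.Gamma_pos_of_pos h2)

lemma cmA_le {e η b : ℕ → ℝ} {m : ℕ} (hη : ∀ i < m, 0 < η i) (hb : ∀ i < m, 0 < b i)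
    (heη : ∀ i < m, 0 < e i + η i) (j : ℕ) : cmA e η b m j ≤ cmA e η b m 0 := by
  refine Finset.prod_le_prod (fun i hi => ?_) (fun i hi => ?_) <;> rw [Finset.mem_range] at hi
  · have h1 : 0 < e i + η i * (1 + j) := by
      have := heη i hi; have := hη i hi
      nlinarith [Nat.cast_nonneg (α := ℝ) j]
    have h2 : 0 < e i + b i + η i * (1 + j) := by have := hb i hi; linarith
    exact (div_pos (Real.Gamma_pos_of_pos h1) (Real.Gamma_pos_of_pos h2)).le
  · have hx₀ : 0 < e i + η i * (1 + (0:ℕ)) := by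
      have := heη i hi; push_cast; linarith
    have hx : e i + η i * (1 + (0:ℕ)) ≤ e i + η i * (1 + j) := by
      have := hη i hi; push_cast
      nlinarith [Nat.cast_nonneg (α := ℝ) j]
    have := cm_aux_ratio_mono hx₀ hx (hb i hi)
    have hrw : ∀ z : ℝ, e i + b i + z = (e i + z) + b i := fun z => by ring
    calc Real.Gamma (e i + η i * (1 + j)) / Real.Gamma (e i + b i + η i * (1 + j))
        = Real.Gamma (e i + η i * (1 + j)) / Real.Gamma ((e i + η i * (1 + j)) + b i) := by
          rw [hrw]
      _ ≤ Real.Gamma (e i + η i * (1 + (0:ℕ))) / Real.Gamma ((e i + η i * (1 + (0:ℕ))) + b i) :=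
          this
      _ = Real.Gamma (e i + η i * (1 + (0:ℕ))) / Real.Gamma (e i + b i + η i * (1 + (0:ℕ))) := by
          rw [hrw]

lemma cm_summ {a : ℕ → ℝ} {C : ℝ} (ha : ∀ n, |a n| ≤ C) (s : ℝ) :
    Summable fun n : ℕ => a n * s ^ n / (n.factorial : ℝ) := by
  refine Summable.of_norm_bounded
    ((Real.summable_pow_div_factorial |s|).mul_left C) (fun n => ?_)
  have h0 : (0:ℝ) < (n.factorial : ℝ) := by positivity
  calc ‖a n * s ^ n / (n.factorial : ℝ)‖ = |a n| * (|s| ^ n / (n.factorial : ℝ)) := by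
        rw [Real.norm_eq_abs, _root_.abs_div, _root_.abs_mul, _root_.abs_pow, Nat.abs_cast]
        ring
    _ ≤ C * (|s| ^ n / (n.factorial : ℝ)) :=
        mul_le_mul_of_nonneg_right (ha n) (by positivity)

lemma cm_summ_deriv (C R : ℝ) :
    Summable fun n : ℕ => C * ((n : ℝ) * R ^ (n-1)) / (n.factorial : ℝ) := by
  have key : Summable (fun n : ℕ => C * (R ^ n / (n.factorial : ℝ))) :=
    (Real.summable_pow_div_factorial R).mul_left C
  refine (summable_nat_add_iff 1).1 ?_
  have heq : (fun n : ℕ => C * (((n+1 : ℕ) : ℝ) * R ^ ((n+1)-1)) / (((n+1).factorial : ℕ) : ℝ))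
      = fun n : ℕ => C * (R ^ n / (n.factorial : ℝ)) := by
    funext n
    have h1 : (n+1)-1 = n := rfl
    rw [h1, Nat.factorial_succ]
    have h2 : ((n:ℝ)+1) ≠ 0 := by positivity
    have h3 : ((n.factorial : ℕ) : ℝ) ≠ 0 := by positivity
    push_cast
    field_simp
  exact heq ▸ key

lemma cm_hasDerivAt {a : ℕ → ℝ} {C : ℝ} (ha : ∀ n, |a n| ≤ C) (k : ℕ) (s : ℝ) :
    HasDerivAt (fun y : ℝ => ∑' n : ℕ, a (n+k) * (-1)^n * y^n / (n.factorial : ℝ))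
      (-∑' n : ℕ, a (n+(k+1)) * (-1)^n * s^n / (n.factorial : ℝ)) s := by
  have hC : 0 ≤ C := le_trans (abs_nonneg _) (ha 0)
  have habs : ∀ j n : ℕ, |a (n+j) * (-1)^n| ≤ C := by
    intro j n
    rw [_root_.abs_mul, _root_.abs_pow, _root_.abs_neg, _root_.abs_one, one_pow, mul_one]
    exact ha _
  set R : ℝ := |s| + 1 with hR
  have hR0 : 0 < R := by positivity
  have hmem : s ∈ Set.Ioo (-R) R := by
    constructor <;> [nlinarith [abs_nonneg s, neg_abs_le s]; nlinarith [le_abs_self s]]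
  have h0mem : (0:ℝ) ∈ Set.Ioo (-R) R := by constructor <;> nlinarith
  have hg' : ∀ (n : ℕ) (y : ℝ), y ∈ Set.Ioo (-R) R →
      ‖a (n+k) * (-1)^n * ((n:ℝ) * y^(n-1)) / (n.factorial : ℝ)‖
        ≤ C * ((n : ℝ) * R ^ (n-1)) / (n.factorial : ℝ) := by
    intro n y hy
    have hyR : |y| ≤ R := by
      rw [abs_le]; exact ⟨hy.1.le, hy.2.le⟩
    have h0 : (0:ℝ) < (n.factorial : ℝ) := by positivity
    have heq : ‖a (n+k) * (-1)^n * ((n:ℝ) * y^(n-1)) / (n.factorial : ℝ)‖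
        = |a (n+k)| * ((n:ℝ) * |y|^(n-1)) / (n.factorial : ℝ) := by
      rw [Real.norm_eq_abs, _root_.abs_div, _root_.abs_mul, _root_.abs_mul (a := (n:ℝ)),
        _root_.abs_mul, _root_.abs_pow (a := (-1:ℝ)), _root_.abs_neg, _root_.abs_one,
        one_pow, mul_one, Nat.abs_cast, Nat.abs_cast, _root_.abs_pow]
    rw [heq]
    have h1 : |y|^(n-1) ≤ R^(n-1) := pow_le_pow_left₀ (abs_nonneg y) hyR _
    gcongr
    exact ha _
  have hder := hasDerivAt_tsum_of_isPreconnected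
    (cm_summ_deriv C R) isOpen_Ioo isPreconnected_Ioo
    (g := fun (n : ℕ) (y : ℝ) => a (n+k) * (-1)^n * y^n / (n.factorial : ℝ))
    (g' := fun (n : ℕ) (y : ℝ) => a (n+k) * (-1)^n * ((n:ℝ) * y^(n-1)) / (n.factorial : ℝ))
    (fun n y _ => (((hasDerivAt_pow n y).const_mul (a (n+k) * (-1)^n)).div_const
      ((n.factorial : ℝ))))
    hg' h0mem (cm_summ (habs k) 0) hmem
  have hsum' : Summable fun n : ℕ =>
      a (n+k) * (-1)^n * ((n:ℝ) * s^(n-1)) / (n.factorial : ℝ) := by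
    refine Summable.of_norm_bounded (cm_summ_deriv C R) (fun n => hg' n s hmem)
  have hshift : (∑' n : ℕ, a (n+k) * (-1)^n * ((n:ℝ) * s^(n-1)) / (n.factorial : ℝ))
      = -∑' n : ℕ, a (n+(k+1)) * (-1)^n * s^n / (n.factorial : ℝ) := by
    rw [Summable.tsum_eq_zero_add hsum']
    simp only [Nat.cast_zero, zero_mul, mul_zero, zero_div, zero_add, pow_zero]
    have hterm : ∀ n : ℕ, a ((n+1)+k) * (-1)^(n+1) * (((n+1:ℕ):ℝ) * s^((n+1)-1)) /
        (((n+1).factorial : ℕ) : ℝ)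
        = -(a (n+(k+1)) * (-1)^n * s^n / (n.factorial : ℝ)) := by
      intro n
      have hidx : (n+1)+k = n+(k+1) := by omega
      have h1 : (n+1)-1 = n := rfl
      rw [hidx, h1, Nat.factorial_succ, pow_succ]
      have h2 : ((n:ℝ)+1) ≠ 0 := by positivity
      have h3 : ((n.factorial : ℕ) : ℝ) ≠ 0 := by positivity
      push_cast
      field_simp
    rw [tsum_congr hterm, tsum_neg]
  rw [← hshift]
  exact hder

lemma cm_key (e η b : ℕ → ℝ) (m : ℕ) (hη : ∀ i < m, 0 < η i) (hb : ∀ i < m, 0 < b i)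
    (heη : ∀ i < m, 0 < e i + η i) :
    ∀ (k : ℕ) (s : ℝ), 0 ≤ s →
      0 ≤ ∑' n : ℕ, cmA e η b m (n+k) * (-1)^n * s^n / (n.factorial : ℝ) := by
  induction m with
  | zero =>
    intro k s hs
    have h1 : ∀ n : ℕ, cmA e η b 0 (n+k) * (-1)^n * s^n / (n.factorial : ℝ)
        = (-s)^n / (n.factorial : ℝ) := by
      intro n
      rw [cmA]
      simp only [Finset.range_zero, Finset.prod_empty, one_mul]
      rw [← _root_.neg_pow]
    rw [tsum_congr h1]
    have h2 : ∑' n : ℕ, (-s)^n / (n.factorial : ℝ) = Real.exp (-s) := by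
      rw [Real.exp_eq_exp_ℝ, NormedSpace.exp_eq_tsum_div]
    rw [h2]; positivity
  | succ m ih =>
    intro k s hs
    have hη' : ∀ i < m, 0 < η i := fun i hi => hη i (hi.trans (Nat.lt_succ_self m))
    have hb' : ∀ i < m, 0 < b i := fun i hi => hb i (hi.trans (Nat.lt_succ_self m))
    have heη' : ∀ i < m, 0 < e i + η i := fun i hi => heη i (hi.trans (Nat.lt_succ_self m))
    have hH : 0 < η m := hη m (Nat.lt_succ_self m)
    have hB : 0 < b m := hb m (Nat.lt_succ_self m)
    have hEH : 0 < e m + η m := heη m (Nat.lt_succ_self m)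
    have hΓB : 0 < Real.Gamma (b m) := Real.Gamma_pos_of_pos hB
    set x : ℕ → ℝ := fun n => e m + η m * (1 + ((n+k : ℕ) : ℝ)) with hxdef
    have hx : ∀ n, 0 < x n := by
      intro n; simp only [hxdef]
      nlinarith [Nat.cast_nonneg (α := ℝ) (n+k)]
    have hxge : ∀ n, e m + η m ≤ x n := by
      intro n; simp only [hxdef]
      nlinarith [Nat.cast_nonneg (α := ℝ) (n+k)]
    set g : ℕ → ℝ → ℝ := fun n t =>
      (cmA e η b m (n+k) * (-1)^n * s^n / (n.factorial : ℝ) * (Real.Gamma (b m))⁻¹) *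
        (t ^ (x n - 1) * (1-t) ^ (b m - 1)) with hgdef
    have hInt : ∀ n, IntegrableOn (g n) (Set.Ioc 0 1) :=
      fun n => (cm_aux_beta_integrable (hx n) hB).const_mul _
    have hval : ∀ n : ℕ, (∫ t in Set.Ioc (0:ℝ) 1, g n t)
        = cmA e η b (m+1) (n+k) * (-1)^n * s^n / (n.factorial : ℝ) := by
      intro n
      rw [hgdef]
      simp only
      rw [MeasureTheory.integral_const_mul, cm_aux_beta_value (hx n) hB]
      have hsplit : cmA e η b (m+1) (n+k)
          = cmA e η b m (n+k) * (Real.Gamma (x n) / Real.Gamma (x n + b m)) := by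
        rw [cmA, cmA, Finset.prod_range_succ, hxdef]
        congr 2
        ring
      rw [hsplit]
      have h1 : Real.Gamma (x n + b m) ≠ 0 :=
        (Real.Gamma_pos_of_pos (by linarith [hx n])).ne'
      field_simp
    have hnorm : ∀ n : ℕ, (∫ t in Set.Ioc (0:ℝ) 1, ‖g n t‖)
        ≤ (cmA e η b m 0 * (Real.Gamma (e m + η m) / Real.Gamma (e m + η m + b m))) *
          (s ^ n / (n.factorial : ℝ)) := by
      intro n
      have hcong : ∀ t ∈ Set.Ioc (0:ℝ) 1, ‖g n t‖
          = (cmA e η b m (n+k) * s^n / (n.factorial : ℝ) * (Real.Gamma (b m))⁻¹) *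
            (t ^ (x n - 1) * (1-t) ^ (b m - 1)) := by
        intro t ht
        rw [hgdef]
        simp only [Real.norm_eq_abs, _root_.abs_mul]
        rw [_root_.abs_of_nonneg (a := t ^ (x n - 1)) (Real.rpow_nonneg ht.1.le _),
          _root_.abs_of_nonneg (a := (1-t) ^ (b m - 1)) (Real.rpow_nonneg (by linarith [ht.2]) _)]
        rw [_root_.abs_div, _root_.abs_mul, _root_.abs_mul, _root_.abs_pow, _root_.abs_pow,
          _root_.abs_neg, _root_.abs_one, one_pow, mul_one,
          abs_of_pos (cmA_pos hη' hb' heη' (n+k)), _root_.abs_of_nonneg hs,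
          Nat.abs_cast, abs_of_pos (inv_pos.mpr hΓB)]
      rw [setIntegral_congr_fun measurableSet_Ioc hcong, MeasureTheory.integral_const_mul,
        cm_aux_beta_value (hx n) hB]
      have hr := cm_aux_ratio_mono hEH (hxge n) hB
      have h2 : 0 < Real.Gamma (x n + b m) := Real.Gamma_pos_of_pos (by linarith [hx n])
      have h3 : 0 ≤ Real.Gamma (x n) := (Real.Gamma_pos_of_pos (hx n)).le
      have hAle := cmA_le hη' hb' heη' (n+k)
      have hApos := (cmA_pos hη' hb' heη' (n+k))
      have hsn : (0:ℝ) ≤ s ^ n / (n.factorial : ℝ) := by positivity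
      have key : cmA e η b m (n+k) * s^n / (n.factorial : ℝ) * (Real.Gamma (b m))⁻¹ *
            (Real.Gamma (x n) * Real.Gamma (b m) / Real.Gamma (x n + b m))
          = (cmA e η b m (n+k) * (Real.Gamma (x n) / Real.Gamma (x n + b m))) *
            (s ^ n / (n.factorial : ℝ)) := by
        field_simp
      rw [key]
      have hr0 : 0 ≤ Real.Gamma (x n) / Real.Gamma (x n + b m) := by positivity
      refine mul_le_mul_of_nonneg_right ?_ hsn
      exact mul_le_mul hAle hr hr0 (le_trans hApos.le hAle)
    have hsum_norm : Summable fun n : ℕ => ∫ t in Set.Ioc (0:ℝ) 1, ‖g n t‖ := by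
      refine Summable.of_nonneg_of_le (fun n => integral_nonneg (fun t => norm_nonneg _))
        hnorm ?_
      exact (Real.summable_pow_div_factorial s).mul_left _
    have hswap := integral_tsum_of_summable_integral_norm hInt hsum_norm
    have htarget : ∑' n : ℕ, cmA e η b (m+1) (n+k) * (-1)^n * s^n / (n.factorial : ℝ)
        = ∫ t in Set.Ioc (0:ℝ) 1, ∑' n : ℕ, g n t := by
      rw [← hswap]
      exact tsum_congr fun n => (hval n).symm
    rw [htarget]
    refine setIntegral_nonneg measurableSet_Ioc (fun t ht => ?_)
    have hpow : ∀ n : ℕ, t ^ (x n - 1)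
        = t ^ (e m + η m * (1 + (k:ℝ)) - 1) * (t ^ (η m)) ^ n := by
      intro n
      have hexp : x n - 1 = (e m + η m * (1 + (k:ℝ)) - 1) + η m * n := by
        rw [hxdef]; push_cast; ring
      rw [hexp, Real.rpow_add ht.1, ← Real.rpow_natCast (t ^ (η m)) n,
        ← Real.rpow_mul ht.1.le]
    have hptw : ∑' n : ℕ, g n t
        = ((Real.Gamma (b m))⁻¹ * (t ^ (e m + η m * (1 + (k:ℝ)) - 1) * (1-t) ^ (b m - 1))) *
          ∑' n : ℕ, cmA e η b m (n+k) * (-1)^n * (s * t ^ (η m))^n / (n.factorial : ℝ) := by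
      rw [← tsum_mul_left]
      refine tsum_congr fun n => ?_
      rw [hgdef]
      simp only
      rw [hpow n, mul_pow]
      ring
    rw [hptw]
    have hW : 0 ≤ (Real.Gamma (b m))⁻¹ *
        (t ^ (e m + η m * (1 + (k:ℝ)) - 1) * (1-t) ^ (b m - 1)) := by
      have h1 : (0:ℝ) ≤ t := ht.1.le
      have h2 : (0:ℝ) ≤ 1 - t := by linarith [ht.2]
      positivity
    exact mul_nonneg hW (ih hη' hb' heη' k (s * t ^ (η m))
      (mul_nonneg hs (Real.rpow_nonneg ht.1.le _)))

lemma cm_iterDW {f : ℝ → ℝ} {s : Set ℝ} (hs : IsOpen s) {x : ℝ} (hx : x ∈ s) (k : ℕ) :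
    iteratedDerivWithin k f s x = iteratedDeriv k f x := by
  rw [iteratedDerivWithin, iteratedDeriv, iteratedFDerivWithin_of_isOpen k hs hx]

/-- the generalized Wright function
`(1/K₂)·_pΨ_p[(eᵢ+ηᵢ,ηᵢ);(eᵢ+bᵢ+ηᵢ,ηᵢ)|−s]` (Laplace transform of the class (C2) Fox-H
density) is entire and completely monotone on `(0,∞)`. -/
theorem wright_C2_completely_monotone
    (p : ℕ) (hp : 1 ≤ p)
    (e η b : ℕ → ℝ)
    (hη : ∀ i < p, 0 < η i) (hb : ∀ i < p, 0 < b i) (heη : ∀ i < p, 0 < e i + η i)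
    (hbsum : 1 < ∑ i ∈ Finset.range p, b i)
    (K₂ : ℝ)
    (hK₂ : K₂ = ∏ i ∈ Finset.range p, (Real.Gamma (e i + η i) / Real.Gamma (e i + b i + η i)))
    (f : ℝ → ℝ)
    (hf : ∀ s : ℝ, f s = (1 / K₂) *
      ∑' n : ℕ, ((∏ i ∈ Finset.range p, Real.Gamma (e i + η i * (1 + n))) /
        (∏ i ∈ Finset.range p, Real.Gamma (e i + b i + η i * (1 + n)))) *
        (-s) ^ n / (n.factorial : ℝ)) :
    (∀ z : ℂ, Summable fun n : ℕ =>
      ‖(((∏ i ∈ Finset.range p, Real.Gamma (e i + η i * (1 + n))) /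
          (∏ i ∈ Finset.range p, Real.Gamma (e i + b i + η i * (1 + n))) : ℝ) : ℂ) *
        z ^ n / (n.factorial : ℝ)‖) ∧
    ContDiffOn ℝ (⊤ : ℕ∞) f (Set.Ioi 0) ∧
    ∀ k : ℕ, ∀ s > (0 : ℝ), 0 ≤ (-1 : ℝ) ^ k * iteratedDerivWithin k f (Set.Ioi 0) s := by
  have hApos : ∀ j, 0 < cmA e η b p j := cmA_pos hη hb heη
  have hAle : ∀ j, cmA e η b p j ≤ cmA e η b p 0 := cmA_le hη hb heη
  have habsA : ∀ j, |cmA e η b p j| ≤ cmA e η b p 0 := fun j => by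
    rw [_root_.abs_of_pos (hApos j)]; exact hAle j
  have hK₂pos : 0 < K₂ := by
    rw [hK₂]
    refine Finset.prod_pos (fun i hi => ?_)
    rw [Finset.mem_range] at hi
    exact div_pos (Real.Gamma_pos_of_pos (heη i hi))
      (Real.Gamma_pos_of_pos (by have := hb i hi; have := heη i hi; linarith))
  have hquot : ∀ n : ℕ, ((∏ i ∈ Finset.range p, Real.Gamma (e i + η i * (1 + n))) /
        (∏ i ∈ Finset.range p, Real.Gamma (e i + b i + η i * (1 + n)))) = cmA e η b p n := by
    intro n; rw [cmA, Finset.prod_div_distrib]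
  refine ⟨?_, ?_, ?_⟩
  · -- summability over ℂ
    intro z
    refine Summable.of_nonneg_of_le (fun n => norm_nonneg _) (fun n => ?_)
      ((Real.summable_pow_div_factorial ‖z‖).mul_left (cmA e η b p 0))
    rw [hquot n]
    rw [norm_div, norm_mul, Complex.norm_real, norm_pow, Real.norm_eq_abs,
      _root_.abs_of_pos (hApos n)]
    have hden : ‖((n.factorial : ℝ) : ℂ)‖ = (n.factorial : ℝ) := by
      rw [Complex.norm_real, Real.norm_eq_abs, Nat.abs_cast]
    rw [hden]
    have h0 : (0:ℝ) < (n.factorial : ℝ) := by positivity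
    rw [div_le_iff₀ h0]
    have := mul_le_mul_of_nonneg_right (hAle n) (pow_nonneg (norm_nonneg z) n)
    calc cmA e η b p n * ‖z‖^n ≤ cmA e η b p 0 * ‖z‖^n := this
      _ = cmA e η b p 0 * (‖z‖^n / (n.factorial : ℝ)) * (n.factorial : ℝ) := by
          field_simp
  · -- smoothness (analyticity)
    set c : ℕ → ℝ := fun n => (1/K₂) * cmA e η b p n * (-1)^n / (n.factorial : ℝ) with hc
    set q := FormalMultilinearSeries.ofScalars ℝ c with hq
    have hfq : f = q.sum := by
      funext s
      have hqsum : q.sum s = ∑' n : ℕ, c n • s^n :=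
        FormalMultilinearSeries.ofScalars_sum_eq c s
      rw [hf s, hqsum, ← tsum_mul_left]
      refine tsum_congr fun n => ?_
      rw [hquot n, smul_eq_mul, hc]
      simp only
      rw [_root_.neg_pow]
      ring
    have hcn : ∀ n : ℕ, ‖c n‖ = (1/K₂) * cmA e η b p n / (n.factorial : ℝ) := by
      intro n
      rw [hc]
      simp only
      rw [Real.norm_eq_abs, _root_.abs_div, _root_.abs_mul, _root_.abs_mul, _root_.abs_pow,
        _root_.abs_neg, _root_.abs_one, one_pow, mul_one, Nat.abs_cast,
        abs_of_pos (hApos n), abs_of_pos (by positivity : (0:ℝ) < 1/K₂)]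
    have hrad : q.radius = ⊤ := by
      refine FormalMultilinearSeries.radius_eq_top_of_summable_norm q (fun r => ?_)
      refine Summable.of_nonneg_of_le (fun n => by positivity) (fun n => ?_)
        ((Real.summable_pow_div_factorial (r:ℝ)).mul_left ((1/K₂) * cmA e η b p 0))
      rw [FormalMultilinearSeries.ofScalars_norm, hcn n]
      have h0 : (0:ℝ) < (n.factorial : ℝ) := by positivity
      have h1 : (1/K₂) * cmA e η b p n / (n.factorial : ℝ) * (r:ℝ)^n
          = ((1/K₂) * cmA e η b p n) * ((r:ℝ)^n / (n.factorial : ℝ)) := by ring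
      rw [h1]
      refine mul_le_mul_of_nonneg_right ?_ (by positivity)
      exact mul_le_mul_of_nonneg_left (hAle n) (by positivity)
    have hball : HasFPowerSeriesOnBall q.sum q 0 ⊤ := by
      have := q.hasFPowerSeriesOnBall (by rw [hrad]; exact ENNReal.zero_lt_top)
      rwa [hrad] at this
    have han : AnalyticOnNhd ℝ f (Set.Ioi 0) := by
      intro y hy
      rw [hfq]
      exact hball.analyticAt_of_mem (EMetric.mem_ball.mpr (edist_lt_top y 0))
    exact han.contDiffOn (uniqueDiffOn_Ioi 0)
  · -- complete monotonicity
    have hT : ∀ (k : ℕ) (s : ℝ), HasDerivAt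
        (fun y : ℝ => ∑' n : ℕ, cmA e η b p (n+k) * (-1)^n * y^n / (n.factorial : ℝ))
        (-∑' n : ℕ, cmA e η b p (n+(k+1)) * (-1)^n * s^n / (n.factorial : ℝ)) s :=
      fun k s => cm_hasDerivAt habsA k s
    have hiter : ∀ k : ℕ, iteratedDeriv k f
        = fun s : ℝ => ((1/K₂) * (-1)^k) *
            ∑' n : ℕ, cmA e η b p (n+k) * (-1)^n * s^n / (n.factorial : ℝ) := by
      intro k
      induction k with
      | zero =>
        funext s
        rw [iteratedDeriv_zero, hf s]
        simp only [pow_zero, mul_one]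
        congr 1
        refine tsum_congr fun n => ?_
        rw [hquot n, _root_.neg_pow]
        ring
      | succ k ih =>
        funext s
        rw [iteratedDeriv_succ, ih]
        have hd := (hT k s).const_mul ((1/K₂) * (-1)^k)
        rw [hd.deriv]
        ring
    intro k s hs
    have hsIoi : s ∈ Set.Ioi (0:ℝ) := Set.mem_Ioi.mpr hs
    rw [cm_iterDW isOpen_Ioi hsIoi k, hiter k]
    simp only
    have h11 : ((-1:ℝ))^k * ((-1:ℝ))^k = 1 := by
      rw [← pow_add, ← two_mul, pow_mul]
      norm_num
    have hre : (-1:ℝ)^k * (((1/K₂) * (-1)^k) *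
        ∑' n : ℕ, cmA e η b p (n+k) * (-1)^n * s^n / (n.factorial : ℝ))
        = ((-1:ℝ)^k * (-1:ℝ)^k) * ((1/K₂) *
          ∑' n : ℕ, cmA e η b p (n+k) * (-1)^n * s^n / (n.factorial : ℝ)) := by ring
    rw [hre, h11, one_mul]
    exact mul_nonneg (by positivity)
      (cm_key e η b p hη hb heη k s hs.le)
end

section
/- Let e ∈ ℝ and 0 < η < 1 with e + η > 0. Then the stretched-gamma function x ↦ x^{e/η} e^{−x^{1/η}} is integrable on (0,∞) with ∫₀^∞ x^{e/η} e^{−x^{1/η}} dx = η·Γ(e+η); moreover the series Σ_{n=0}^∞ Γ(e+η(1+n))·z^n/n! converges absolutely for every z ∈ ℂ, and for every s ≥ 0 one has ∫₀^∞ e^{−sx} x^{e/η} e^{−x^{1/η}} dx = η·Σ_{n=0}^∞ Γ(e+η(1+n))·(−s)^n/n!. In particular, s ↦ (1/(η·Γ(e+η))) ∫₀^∞ e^{−sx} x^{e/η} e^{−x^{1/η}} dx is completely monotone on (0,∞). -/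
open MeasureTheory Finset Filter Real Set Topology

lemma sg_gamma_bound {η : ℝ} (hη0 : 0 < η) (hη1 : η < 1) {a : ℝ} (ha : 0 < a) :
    Real.Gamma (a + η) ≤ Real.Gamma a * a ^ η := by
  have hx : a ∈ Set.Ioi (0:ℝ) := ha
  have hy : a + 1 ∈ Set.Ioi (0:ℝ) := by simp only [Set.mem_Ioi]; linarith
  have hconv := Real.convexOn_log_Gamma.2 hx hy (by linarith : (0:ℝ) ≤ 1 - η) hη0.le
    (by ring)
  have hcomb : (1 - η) • a + η • (a + 1) = a + η := by simp [smul_eq_mul]; ring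
  rw [hcomb] at hconv
  have hΓa : 0 < Real.Gamma a := Real.Gamma_pos_of_pos ha
  have hΓaη : 0 < Real.Gamma (a + η) := Real.Gamma_pos_of_pos (by linarith)
  have hlog : Real.log (Real.Gamma (a + η)) ≤ Real.log (Real.Gamma a * a ^ η) := by
    have h1 : Real.Gamma (a + 1) = a * Real.Gamma a := Real.Gamma_add_one ha.ne'
    have h2 : Real.log (Real.Gamma (a+1)) = Real.log a + Real.log (Real.Gamma a) := by
      rw [h1, Real.log_mul ha.ne' hΓa.ne']
    have h3 : Real.log (Real.Gamma a * a ^ η)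
        = Real.log (Real.Gamma a) + η * Real.log a := by
      rw [Real.log_mul hΓa.ne' (by positivity), Real.log_rpow ha]
    simp only [Function.comp_apply, smul_eq_mul] at hconv
    rw [h3]
    calc Real.log (Real.Gamma (a + η))
        ≤ (1-η) * Real.log (Real.Gamma a) + η * Real.log (Real.Gamma (a+1)) := hconv
      _ = Real.log (Real.Gamma a) + η * Real.log a := by rw [h2]; ring
  have := Real.exp_le_exp.2 hlog
  rwa [Real.exp_log hΓaη, Real.exp_log (by positivity)] at this

lemma sg_ratio_tendsto {e η : ℝ} (hη0 : 0 < η) (hη1 : η < 1) (heη : 0 < e + η) :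
    Tendsto (fun n : ℕ => (Real.Gamma (e + η*(1+n) + η)/(n+1).factorial)
      / (Real.Gamma (e + η*(1+n))/n.factorial)) atTop (𝓝 0) := by
  have hpos : ∀ n : ℕ, 0 < e + η*(1+n) := by
    intro n
    have : (0:ℝ) ≤ η * n := by positivity
    nlinarith
  have hΓpos : ∀ n : ℕ, (0:ℝ) < Real.Gamma (e + η*(1+n)) / n.factorial := fun n =>
    div_pos (Real.Gamma_pos_of_pos (hpos n)) (by positivity)
  have hΓpos' : ∀ n : ℕ, (0:ℝ) < Real.Gamma (e + η*(1+n) + η) / (n+1).factorial := fun n =>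
    div_pos (Real.Gamma_pos_of_pos (by have := hpos n; linarith)) (by positivity)
  have hlim : Tendsto (fun n : ℕ => ((n:ℝ)) ^ (η-1)) atTop (𝓝 0) := by
    have h0 : Tendsto (fun x : ℝ => x ^ (η-1)) atTop (𝓝 0) := by
      rw [show η - 1 = -(1-η) by ring]
      exact tendsto_rpow_neg_atTop (by linarith)
    exact h0.comp tendsto_natCast_atTop_atTop
  apply tendsto_of_tendsto_of_tendsto_of_le_of_le' tendsto_const_nhds hlim
  · exact Eventually.of_forall fun n => le_of_lt (div_pos (hΓpos' n) (hΓpos n))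
  · have h1 : ∀ᶠ n : ℕ in atTop, (e+η)/(1-η) ≤ (n:ℝ) :=
      tendsto_natCast_atTop_atTop.eventually_ge_atTop _
    filter_upwards [h1, eventually_ge_atTop 1] with n hc hn1
    have hn0 : (0:ℝ) < n := by exact_mod_cast hn1
    set a := e + η*(1+(n:ℝ)) with ha_def
    have ha : 0 < a := hpos n
    have han : a ≤ n := by
      rw [div_le_iff₀ (by linarith : (0:ℝ) < 1 - η)] at hc
      have : (0:ℝ) ≤ η * n := by positivity
      nlinarith
    have hfac : ((n+1).factorial : ℝ) = ((n:ℝ)+1) * n.factorial := by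
      rw [Nat.factorial_succ]; push_cast; ring
    have hΓa : 0 < Real.Gamma a := Real.Gamma_pos_of_pos ha
    have hfn : (0:ℝ) < n.factorial := by positivity
    have hratio : (Real.Gamma (a + η)/(n+1).factorial) / (Real.Gamma a/n.factorial)
        = Real.Gamma (a + η) / (Real.Gamma a * ((n:ℝ)+1)) := by
      rw [hfac]
      field_simp
    rw [hratio]
    calc Real.Gamma (a + η) / (Real.Gamma a * ((n:ℝ)+1))
        ≤ (Real.Gamma a * a ^ η) / (Real.Gamma a * ((n:ℝ)+1)) := by
          gcongr
          exact sg_gamma_bound hη0 hη1 ha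
      _ = a ^ η / ((n:ℝ)+1) := by rw [mul_div_mul_left _ _ hΓa.ne']
      _ ≤ (n:ℝ) ^ η / (n:ℝ) := by
          apply div_le_div₀ (by positivity) (Real.rpow_le_rpow ha.le han hη0.le) hn0
          linarith
      _ = (n:ℝ) ^ (η-1) := by rw [Real.rpow_sub hn0, Real.rpow_one]

lemma sg_summable {e η : ℝ} (hη0 : 0 < η) (hη1 : η < 1) (heη : 0 < e + η)
    {r : ℝ} (hr : 0 ≤ r) :
    Summable (fun n : ℕ => Real.Gamma (e + η*(1+n)) * r^n / n.factorial) := by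
  have hpos : ∀ n : ℕ, 0 < e + η*(1+n) := by
    intro n
    have : (0:ℝ) ≤ η * n := by positivity
    nlinarith
  apply summable_of_ratio_norm_eventually_le (r := 1/2) (by norm_num)
  have hε : (0:ℝ) < 1/(2*(r+1)) := by positivity
  filter_upwards [(sg_ratio_tendsto hη0 hη1 heη).eventually (gt_mem_nhds hε)] with n hn
  have hcast : e + η*(1+((n:ℝ)+1)) = e + η*(1+(n:ℝ)) + η := by ring
  have hdn : (0:ℝ) < Real.Gamma (e + η*(1+(n:ℝ))) / n.factorial :=
    div_pos (Real.Gamma_pos_of_pos (hpos n)) (by positivity)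
  set d0 := Real.Gamma (e + η*(1+(n:ℝ))) / n.factorial with hd0
  set d1 := Real.Gamma (e + η*(1+(n:ℝ)) + η) / (n+1).factorial with hd1
  have hn' : d1 ≤ 1/(2*(r+1)) * d0 := le_of_lt ((div_lt_iff₀ hdn).mp hn)
  have her : 1/(2*(r+1)) * r ≤ 1/2 := by
    rw [div_mul_eq_mul_div, div_le_div_iff₀ (by positivity) two_pos]
    nlinarith
  have hg0 : 0 ≤ Real.Gamma (e + η*(1+(n:ℝ))) := (Real.Gamma_pos_of_pos (hpos n)).le
  have hg1 : 0 ≤ Real.Gamma (e + η*(1+(n:ℝ)) + η) :=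
    (Real.Gamma_pos_of_pos (by have := hpos n; linarith)).le
  have hgoal1 : Real.Gamma (e + η*(1+((n+1:ℕ):ℝ))) * r^(n+1) / ((n+1).factorial : ℝ)
      = d1 * (r * r^n) := by
    push_cast
    rw [hcast, hd1]
    ring
  have hgoal0 : (1:ℝ)/2 * (Real.Gamma (e + η*(1+(n:ℝ))) * r^n / n.factorial)
      = 1/2 * (d0 * r^n) := by rw [hd0]; ring
  rw [Real.norm_of_nonneg (by push_cast; rw [hcast]; positivity),
    Real.norm_of_nonneg (by positivity), hgoal1, hgoal0]
  calc d1 * (r * r^n) ≤ (1/(2*(r+1)) * d0) * (r * r^n) :=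
        mul_le_mul_of_nonneg_right hn' (by positivity)
    _ = (1/(2*(r+1)) * r) * (d0 * r^n) := by ring
    _ ≤ 1/2 * (d0 * r^n) :=
        mul_le_mul_of_nonneg_right her (by positivity)

lemma sg_integrable {e η : ℝ} (hη0 : 0 < η) (hη1 : η < 1) (heη : 0 < e + η)
    (k : ℕ) {s : ℝ} (hs : 0 ≤ s) :
    IntegrableOn (fun x : ℝ => x^k * (Real.exp (-(s*x)) * (x^(e/η) * Real.exp (-(x^(1/η))))))
      (Set.Ioi 0) volume := by
  have hbase : IntegrableOn (fun x : ℝ => x ^ ((k:ℝ) + e/η) * Real.exp (-(x^(1/η))))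
      (Set.Ioi 0) volume := by
    apply integrableOn_rpow_mul_exp_neg_rpow
    · have h1 : -1 < e/η := by rw [neg_lt, ← neg_div, div_lt_iff₀ hη0]; nlinarith
      have h2 : (0:ℝ) ≤ k := Nat.cast_nonneg k
      linarith
    · positivity
  apply Integrable.mono' hbase
  · apply Measurable.aestronglyMeasurable
    fun_prop
  · rw [ae_restrict_iff' measurableSet_Ioi]
    refine Eventually.of_forall fun x hx => ?_
    have hx0 : (0:ℝ) < x := hx
    have hrw : (x:ℝ)^k * x^(e/η) = x ^ ((k:ℝ) + e/η) := by
      rw [← Real.rpow_natCast x k, ← Real.rpow_add hx0]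
    have hexp1 : Real.exp (-(s*x)) ≤ 1 := by
      rw [← Real.exp_zero]
      exact Real.exp_le_exp.mpr (by nlinarith)
    rw [Real.norm_of_nonneg (by positivity)]
    calc x^k * (Real.exp (-(s*x)) * (x^(e/η) * Real.exp (-(x^(1/η)))))
        ≤ x^k * (1 * (x^(e/η) * Real.exp (-(x^(1/η))))) := by
          gcongr
      _ = x ^ ((k:ℝ) + e/η) * Real.exp (-(x^(1/η))) := by
          rw [one_mul, ← mul_assoc, hrw]

lemma sg_subst {e η : ℝ} (hη0 : 0 < η) (hη1 : η < 1) (heη : 0 < e + η) (s : ℝ) :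
    (∫ x in Set.Ioi (0:ℝ), Real.exp (-(s*x)) * (x^(e/η) * Real.exp (-(x^(1/η)))))
      = ∫ t in Set.Ioi (0:ℝ), η * (Real.exp (-(s*t^η)) * (Real.exp (-t) * t^(e+η-1))) := by
  rw [← integral_comp_rpow_Ioi_of_pos
    (g := fun x => Real.exp (-(s*x)) * (x^(e/η) * Real.exp (-(x^(1/η))))) hη0]
  apply setIntegral_congr_fun measurableSet_Ioi
  intro t ht
  have ht0 : (0:ℝ) < t := ht
  have hη' : η ≠ 0 := hη0.ne'
  have h1 : ((t^η : ℝ))^(e/η) = t^e := by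
    rw [← Real.rpow_mul ht0.le]
    congr 1
    field_simp
  have h2 : ((t^η : ℝ))^(1/η) = t := by
    rw [← Real.rpow_mul ht0.le, mul_one_div, div_self hη', Real.rpow_one]
  simp only [smul_eq_mul]
  rw [h1, h2, show e + η - 1 = (η-1) + e by ring, Real.rpow_add ht0]
  ring

lemma sg_subst0 {e η : ℝ} (hη0 : 0 < η) (hη1 : η < 1) (heη : 0 < e + η) :
    (∫ x in Set.Ioi (0:ℝ), x^(e/η) * Real.exp (-(x^(1/η))))
      = η * Real.Gamma (e + η) := by
  have h := sg_subst hη0 hη1 heη 0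
  simp only [zero_mul, neg_zero, Real.exp_zero, one_mul] at h
  rw [h, integral_const_mul, Real.Gamma_eq_integral heη]

lemma sg_laplace {e η : ℝ} (hη0 : 0 < η) (hη1 : η < 1) (heη : 0 < e + η)
    {s : ℝ} (hs : 0 ≤ s) :
    (∫ x in Set.Ioi (0:ℝ), Real.exp (-(s*x)) * (x^(e/η) * Real.exp (-(x^(1/η)))))
      = η * ∑' n : ℕ, Real.Gamma (e + η*(1+n)) * (-s)^n / n.factorial := by
  have hpos : ∀ n : ℕ, 0 < e + η*(1+n) := by
    intro n
    have : (0:ℝ) ≤ η * n := by positivity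
    nlinarith
  rw [sg_subst hη0 hη1 heη s]
  set F : ℕ → ℝ → ℝ := fun n t =>
    ((-s)^n / n.factorial) * (η * (Real.exp (-t) * t^(e + η*(1+n) - 1))) with hF
  have hFint : ∀ n, Integrable (F n) (volume.restrict (Set.Ioi 0)) := fun n =>
    ((Real.GammaIntegral_convergent (hpos n)).const_mul η).const_mul _
  have hFval : ∀ n, (∫ t in Set.Ioi (0:ℝ), F n t)
      = ((-s)^n / n.factorial) * (η * Real.Gamma (e + η*(1+n))) := by
    intro n
    rw [hF]
    simp only
    rw [integral_const_mul, integral_const_mul, ← Real.Gamma_eq_integral (hpos n)]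
  have hFnorm : ∀ n, (∫ t in Set.Ioi (0:ℝ), ‖F n t‖)
      = (s^n / n.factorial) * (η * Real.Gamma (e + η*(1+n))) := by
    intro n
    have heq : ∀ t ∈ Set.Ioi (0:ℝ), ‖F n t‖
        = (s^n / n.factorial) * (η * (Real.exp (-t) * t^(e + η*(1+n) - 1))) := by
      intro t ht
      have ht0 : (0:ℝ) < t := ht
      rw [hF]
      simp only
      rw [Real.norm_eq_abs, abs_mul, abs_div, abs_pow, abs_neg, abs_of_nonneg hs,
        Nat.abs_cast,
        abs_of_nonneg (by positivity : (0:ℝ) ≤ η * (Real.exp (-t) * t^(e+η*(1+n)-1)))]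
    rw [setIntegral_congr_fun measurableSet_Ioi heq, integral_const_mul, integral_const_mul,
      ← Real.Gamma_eq_integral (hpos n)]
  have hsum : Summable fun n => ∫ t in Set.Ioi (0:ℝ), ‖F n t‖ := by
    apply Summable.congr ((sg_summable hη0 hη1 heη hs).mul_left η)
    intro n
    rw [hFnorm n]
    ring
  have hswap := MeasureTheory.integral_tsum_of_summable_integral_norm hFint hsum
  have hptwise : ∀ t ∈ Set.Ioi (0:ℝ), η * (Real.exp (-(s*t^η)) * (Real.exp (-t) * t^(e+η-1)))
      = ∑' n, F n t := by
    intro t ht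
    have ht0 : (0:ℝ) < t := ht
    have hexp : Real.exp (-(s*t^η)) = ∑' n : ℕ, (-(s*t^η))^n / n.factorial := by
      rw [Real.exp_eq_exp_ℝ, NormedSpace.exp_eq_tsum_div]
    have hterm : ∀ n : ℕ, F n t
        = ((-(s*t^η))^n / n.factorial) * (η * (Real.exp (-t) * t^(e+η-1))) := by
      intro n
      rw [hF]
      simp only
      have h1 : (-(s*t^η))^n = (-s)^n * ((t^η:ℝ))^n := by
        rw [show -(s*t^η) = (-s) * t^η by ring, mul_pow]
      have h2 : ((t^η : ℝ))^(n:ℕ) = t^(η*(n:ℝ)) := by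
        rw [← Real.rpow_natCast (t^η) n, ← Real.rpow_mul ht0.le]
      have h3 : e + η*(1+(n:ℝ)) - 1 = η*(n:ℝ) + (e+η-1) := by ring
      rw [h1, h2, h3, Real.rpow_add ht0]
      ring
    rw [tsum_congr hterm, tsum_mul_right, ← hexp]
    ring
  rw [setIntegral_congr_fun measurableSet_Ioi hptwise, ← hswap, tsum_congr hFval,
    ← tsum_mul_left]
  exact tsum_congr fun n => by ring

lemma sg_hasDeriv {e η : ℝ} (hη0 : 0 < η) (hη1 : η < 1) (heη : 0 < e + η)
    (k : ℕ) {s₀ : ℝ} (hs₀ : 0 < s₀) :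
    HasDerivAt (fun s => ∫ x in Set.Ioi (0:ℝ),
        x^k * (Real.exp (-(s*x)) * (x^(e/η) * Real.exp (-(x^(1/η))))))
      (-(∫ x in Set.Ioi (0:ℝ),
        x^(k+1) * (Real.exp (-(s₀*x)) * (x^(e/η) * Real.exp (-(x^(1/η))))))) s₀ := by
  have key := hasDerivAt_integral_of_dominated_loc_of_deriv_le
    (μ := volume.restrict (Set.Ioi 0))
    (F := fun s (x : ℝ) => x^k * (Real.exp (-(s*x)) * (x^(e/η) * Real.exp (-(x^(1/η))))))
    (F' := fun s (x : ℝ) => -(x^(k+1) * (Real.exp (-(s*x)) * (x^(e/η) * Real.exp (-(x^(1/η)))))))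
    (x₀ := s₀) (s := Metric.ball s₀ s₀)
    (bound := fun x : ℝ => x^(k+1) * (Real.exp (-(0*x)) * (x^(e/η) * Real.exp (-(x^(1/η))))))
    (Metric.ball_mem_nhds s₀ hs₀)
    (Eventually.of_forall fun s => Measurable.aestronglyMeasurable (by fun_prop))
    (sg_integrable hη0 hη1 heη k hs₀.le)
    (Measurable.aestronglyMeasurable (by fun_prop))
    ?_ (sg_integrable hη0 hη1 heη (k+1) le_rfl) ?_
  · have h2 := key.2
    rwa [integral_neg] at h2
  · rw [ae_restrict_iff' measurableSet_Ioi]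
    refine Eventually.of_forall fun x hx => ?_
    intro t htball
    have hx0 : (0:ℝ) < x := hx
    have ht0 : (0:ℝ) < t := by
      rw [Metric.mem_ball, Real.dist_eq, abs_lt] at htball
      linarith [htball.1]
    rw [norm_neg, Real.norm_of_nonneg (by positivity)]
    have hexp : Real.exp (-(t*x)) ≤ Real.exp (-(0*x)) := Real.exp_le_exp.mpr (by nlinarith)
    exact mul_le_mul_of_nonneg_left
      (mul_le_mul_of_nonneg_right hexp (by positivity)) (by positivity)
  · refine Eventually.of_forall fun x => fun t _ => ?_
    have h1 : HasDerivAt (fun s : ℝ => -(s*x)) (-x) t := by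
      simpa using ((hasDerivAt_id t).mul_const x).fun_neg
    have h2 : HasDerivAt (fun s => Real.exp (-(s*x))) (Real.exp (-(t*x)) * -x) t :=
      h1.exp
    have h3 := (h2.mul_const (x^(e/η) * Real.exp (-(x^(1/η))))).const_mul (x^k)
    convert h3 using 1
    case e'_4 => rfl
    show -(x^(k+1) * (Real.exp (-(t*x)) * (x^(e/η) * Real.exp (-(x^(1/η)))))) = _
    rw [pow_succ]
    ring

lemma sg_iterDeriv {e η : ℝ} (hη0 : 0 < η) (hη1 : η < 1) (heη : 0 < e + η)
    (C : ℝ) (k : ℕ) :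
    ∀ s ∈ Set.Ioi (0:ℝ),
      iteratedDerivWithin k (fun s => C * ∫ x in Set.Ioi (0:ℝ),
          x^0 * (Real.exp (-(s*x)) * (x^(e/η) * Real.exp (-(x^(1/η)))))) (Set.Ioi 0) s
      = ((-1)^k * C) * ∫ x in Set.Ioi (0:ℝ),
          x^k * (Real.exp (-(s*x)) * (x^(e/η) * Real.exp (-(x^(1/η))))) := by
  induction k with
  | zero => intro s hs; simp
  | succ k ih =>
    intro s hs
    have hU : UniqueDiffWithinAt ℝ (Set.Ioi (0:ℝ)) s := (uniqueDiffOn_Ioi 0) s hs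
    rw [iteratedDerivWithin_succ]
    rw [derivWithin_congr (fun t ht => ih t ht) (ih s hs)]
    have hd := (sg_hasDeriv hη0 hη1 heη k (show (0:ℝ) < s from hs)).const_mul ((-1:ℝ)^k * C)
    rw [hd.hasDerivWithinAt.derivWithin hU]
    rw [pow_succ]
    ring

lemma sg_contDiffOn {e η : ℝ} (hη0 : 0 < η) (hη1 : η < 1) (heη : 0 < e + η) :
    ContDiffOn ℝ (⊤ : ℕ∞)
      (fun s : ℝ => (1 / (η * Real.Gamma (e + η))) *
        ∫ x in Set.Ioi (0:ℝ),
          Real.exp (-(s*x)) * (x ^ (e/η) * Real.exp (-(x ^ (1/η)))))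
      (Set.Ioi 0) := by
  have hpos : ∀ n : ℕ, 0 < e + η*(1+n) := by
    intro n
    have : (0:ℝ) ≤ η * n := by positivity
    nlinarith
  have hΓ := Real.Gamma_pos_of_pos heη
  set C := (1 / (η * Real.Gamma (e + η))) with hCdef
  have hC : 0 < C := by positivity
  set c : ℕ → ℝ := fun n => C * η * (Real.Gamma (e+η*(1+n)) * (-1)^n / n.factorial) with hc
  have hcne : ∀ n, c n ≠ 0 := by
    intro n
    apply mul_ne_zero (mul_ne_zero hC.ne' hη0.ne')
    exact div_ne_zero (mul_ne_zero (Real.Gamma_pos_of_pos (hpos n)).ne'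
      (pow_ne_zero _ (by norm_num))) (by positivity)
  have hKpos : (0:ℝ) < |C| * |η| :=
    mul_pos (abs_pos.mpr hC.ne') (abs_pos.mpr hη0.ne')
  have heq : ∀ n : ℕ, ‖c n‖ = (|C| * |η|) * (Real.Gamma (e+η*(1+n)) / n.factorial) := by
    intro n
    rw [hc]
    simp only [Real.norm_eq_abs, abs_mul, abs_div, abs_pow, abs_neg, abs_one, one_pow,
      mul_one, Nat.abs_cast, abs_of_nonneg (Real.Gamma_pos_of_pos (hpos n)).le]
  have hratio : Tendsto (fun n => ‖c (n+1)‖ / ‖c n‖) atTop (𝓝 0) := by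
    apply (sg_ratio_tendsto hη0 hη1 heη).congr
    intro n
    rw [heq, heq, show (e+η*(1+((n+1:ℕ):ℝ))) = e+η*(1+(n:ℝ))+η by push_cast; ring,
      mul_div_mul_left _ _ hKpos.ne']
  set p := FormalMultilinearSeries.ofScalars ℝ c with hp
  have hrad : p.radius = ⊤ :=
    FormalMultilinearSeries.ofScalars_radius_eq_top_of_tendsto ℝ c
      (Eventually.of_forall hcne) hratio
  have hball : HasFPowerSeriesOnBall p.sum p 0 p.radius :=
    p.hasFPowerSeriesOnBall (by rw [hrad]; exact ENNReal.zero_lt_top)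
  have hA : AnalyticOnNhd ℝ p.sum (Set.Ioi 0) := by
    intro t ht
    apply hball.analyticAt_of_mem
    rw [hrad]
    simp only [EMetric.mem_ball]
    exact edist_lt_top _ _
  have hEq : Set.EqOn p.sum
      (fun s : ℝ => C * ∫ x in Set.Ioi (0:ℝ),
        Real.exp (-(s*x)) * (x ^ (e/η) * Real.exp (-(x ^ (1/η))))) (Set.Ioi 0) := by
    intro t ht
    have ht0 : (0:ℝ) < t := ht
    simp only
    rw [sg_laplace hη0 hη1 heη ht0.le]
    have hps : p.sum t = ∑' n, c n • t^n := FormalMultilinearSeries.ofScalars_sum_eq c t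
    rw [hps]
    rw [show C * (η * ∑' n : ℕ, Real.Gamma (e + η*(1+n)) * (-t)^n / n.factorial)
        = (C * η) * ∑' n : ℕ, Real.Gamma (e + η*(1+n)) * (-t)^n / n.factorial by ring,
      ← tsum_mul_left]
    apply tsum_congr
    intro n
    rw [smul_eq_mul, hc]
    simp only
    rw [neg_pow t n]
    ring
  exact ((hA.congr isOpen_Ioi hEq).contDiffOn (uniqueDiffOn_Ioi 0))

/-- the stretched-gamma function `x ↦ x^{e/η} e^{−x^{1/η}}` integrates to
`η·Γ(e+η)` over `(0,∞)`, its Laplace transform is the entire generalized Wright series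
`η·Σ Γ(e+η(1+n))(−s)^n/n!`, and the normalized Laplace transform is completely monotone. -/
theorem stretched_gamma_laplace
    (e η : ℝ) (hη : η ∈ Set.Ioo (0 : ℝ) 1) (heη : 0 < e + η) :
    IntegrableOn (fun x : ℝ => x ^ (e / η) * Real.exp (-(x ^ (1 / η)))) (Set.Ioi 0) volume ∧
    (∫ x in Set.Ioi (0 : ℝ), x ^ (e / η) * Real.exp (-(x ^ (1 / η)))) =
      η * Real.Gamma (e + η) ∧
    (∀ z : ℂ, Summable fun n : ℕ =>
      ‖((Real.Gamma (e + η * (1 + n)) : ℝ) : ℂ) * z ^ n / (n.factorial : ℝ)‖) ∧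
    (∀ s : ℝ, 0 ≤ s →
      (∫ x in Set.Ioi (0 : ℝ), Real.exp (-(s * x)) * (x ^ (e / η) * Real.exp (-(x ^ (1 / η))))) =
        η * ∑' n : ℕ, Real.Gamma (e + η * (1 + n)) * (-s) ^ n / (n.factorial : ℝ)) ∧
    (ContDiffOn ℝ (⊤ : ℕ∞)
      (fun s : ℝ => (1 / (η * Real.Gamma (e + η))) *
        ∫ x in Set.Ioi (0 : ℝ),
          Real.exp (-(s * x)) * (x ^ (e / η) * Real.exp (-(x ^ (1 / η)))))
      (Set.Ioi 0) ∧
     ∀ k : ℕ, ∀ s > (0 : ℝ),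
       0 ≤ (-1 : ℝ) ^ k * iteratedDerivWithin k
         (fun s : ℝ => (1 / (η * Real.Gamma (e + η))) *
           ∫ x in Set.Ioi (0 : ℝ),
             Real.exp (-(s * x)) * (x ^ (e / η) * Real.exp (-(x ^ (1 / η)))))
         (Set.Ioi 0) s) := by
  obtain ⟨hη0, hη1⟩ := hη
  have hpos : ∀ n : ℕ, 0 < e + η*(1+n) := by
    intro n
    have : (0:ℝ) ≤ η * n := by positivity
    nlinarith
  refine ⟨?_, sg_subst0 hη0 hη1 heη, ?_, fun s hs => sg_laplace hη0 hη1 heη hs,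
    sg_contDiffOn hη0 hη1 heη, ?_⟩
  · simpa using sg_integrable hη0 hη1 heη 0 le_rfl
  · intro z
    apply Summable.congr (sg_summable hη0 hη1 heη (norm_nonneg z))
    intro n
    rw [norm_div, norm_mul, norm_pow, Complex.norm_real, Complex.norm_real,
      Real.norm_eq_abs, Real.norm_eq_abs, Nat.abs_cast,
      abs_of_nonneg (Real.Gamma_pos_of_pos (hpos n)).le]
  · intro k s hs
    have hC : 0 < (1 / (η * Real.Gamma (e + η))) := by
      have := Real.Gamma_pos_of_pos heη
      positivity
    have hrew : (fun s : ℝ => (1 / (η * Real.Gamma (e + η))) *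
          ∫ x in Set.Ioi (0 : ℝ),
            Real.exp (-(s * x)) * (x ^ (e / η) * Real.exp (-(x ^ (1 / η)))))
        = (fun s : ℝ => (1 / (η * Real.Gamma (e + η))) *
          ∫ x in Set.Ioi (0 : ℝ),
            x^0 * (Real.exp (-(s * x)) * (x ^ (e / η) * Real.exp (-(x ^ (1 / η)))))) := by
      funext t
      simp only [pow_zero, one_mul]
    rw [hrew, sg_iterDeriv hη0 hη1 heη _ k s hs]
    have hG : 0 ≤ ∫ x in Set.Ioi (0:ℝ),
        x^k * (Real.exp (-(s * x)) * (x ^ (e / η) * Real.exp (-(x ^ (1 / η))))) := by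
      apply setIntegral_nonneg measurableSet_Ioi
      intro x hx
      have hx0 : (0:ℝ) < x := hx
      positivity
    rw [show ((-1:ℝ))^k * (((-1:ℝ))^k * (1 / (η * Real.Gamma (e + η))) *
        ∫ x in Set.Ioi (0:ℝ),
          x^k * (Real.exp (-(s * x)) * (x ^ (e / η) * Real.exp (-(x ^ (1 / η))))))
      = ((-1:ℝ)^k * (-1:ℝ)^k) * ((1 / (η * Real.Gamma (e + η))) *
        ∫ x in Set.Ioi (0:ℝ),
          x^k * (Real.exp (-(s * x)) * (x ^ (e / η) * Real.exp (-(x ^ (1 / η)))))) by ring,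
      ← mul_pow, show ((-1:ℝ)*(-1)) = 1 by norm_num, one_pow, one_mul]
    exact mul_nonneg hC.le hG
end
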